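/- arXiv:2512.20439 — 9 statements merged into one kernel-verified Lean document; each statement's English description precedes it below -/
import Mathlib

section
/- Define P : ℝ² → ℝ² by P(x₁, x₂) = (x₁²/2 + 2x₁x₂, −x₂²/2 − x₁x₂). With the ℓ¹ norm on ℝ², the supremum of ‖P(x)‖₁ over the closed unit ball of ℓ¹² equals 1. -/
/-!
With `a = |x₁|` and `b = |x₂|`, the triangle inequality bounds `‖P(x)‖₁` by
`a² / 2 + 3ab + b² / 2 = (a + b)² / 2 + 2ab ≤ (a + b)²`, since `4ab ≤ (a + b)²`.
So `‖P(x)‖₁ ≤ ‖x‖₁² ≤ 1` on the unit ball, and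
`x = (1/2, 1/2)` gives `P(x) = (5/8, -3/8)`, of norm 1.
-/

/-- `‖P(x₁, x₂)‖₁`. -/
noncomputable def normP (x₁ x₂ : ℝ) : ℝ :=
  |x₁ ^ 2 / 2 + 2 * x₁ * x₂| + |-x₂ ^ 2 / 2 - x₁ * x₂|

lemma abs_fst_P_le (x₁ x₂ : ℝ) :
    |x₁ ^ 2 / 2 + 2 * x₁ * x₂| ≤ |x₁| ^ 2 / 2 + 2 * (|x₁| * |x₂|) :=
  calc |x₁ ^ 2 / 2 + 2 * x₁ * x₂| ≤ |x₁ ^ 2 / 2| + |2 * x₁ * x₂| := abs_add_le _ _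
    _ = |x₁| ^ 2 / 2 + 2 * (|x₁| * |x₂|) := by
      rw [abs_div, abs_pow, abs_mul, abs_mul, abs_two, mul_assoc]

lemma abs_snd_P_le (x₁ x₂ : ℝ) :
    |-x₂ ^ 2 / 2 - x₁ * x₂| ≤ |x₂| ^ 2 / 2 + |x₁| * |x₂| :=
  calc |-x₂ ^ 2 / 2 - x₁ * x₂| ≤ |-x₂ ^ 2 / 2| + |x₁ * x₂| := abs_sub _ _
    _ = |x₂| ^ 2 / 2 + |x₁| * |x₂| := by
      rw [abs_div, abs_neg, abs_pow, abs_mul, abs_two]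

lemma normP_le_sq (x₁ x₂ : ℝ) : normP x₁ x₂ ≤ (|x₁| + |x₂|) ^ 2 := by
  have h₁ := abs_fst_P_le x₁ x₂
  have h₂ := abs_snd_P_le x₁ x₂
  unfold normP
  nlinarith [sq_nonneg (|x₁| - |x₂|)]

lemma normP_half_half : normP (1 / 2) (1 / 2) = 1 := by
  norm_num [normP, abs_of_pos, abs_of_neg]

theorem stmt_2 :
    sSup { r : ℝ | ∃ x₁ x₂ : ℝ, |x₁| + |x₂| ≤ 1 ∧
      r = |x₁ ^ 2 / 2 + 2 * x₁ * x₂| + |-x₂ ^ 2 / 2 - x₁ * x₂| } = 1 := by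
  refine IsGreatest.csSup_eq ⟨⟨1 / 2, 1 / 2, by norm_num, normP_half_half.symm⟩, ?_⟩
  rintro r ⟨x₁, x₂, hx, rfl⟩
  have hx₀ : 0 ≤ |x₁| + |x₂| := by positivity
  calc normP x₁ x₂ ≤ (|x₁| + |x₂|) ^ 2 := normP_le_sq x₁ x₂
    _ ≤ 1 := pow_le_one₀ hx₀ hx
end

section
/- Let x = (x₁, x₂) ∈ ℝ² with |x₁| + |x₂| = 1 and let b = (b₁, b₂) ∈ ℝ² with max(|b₁|, |b₂|) = 1. If x₁²·b₁ + x₂²·b₂ = 1, then (|x₁| = 1 and x₂ = 0) or (x₁ = 0 and |x₂| = 1). -/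
/-! Since `bᵢ ≤ 1`, we get `1 = x₁² b₁ + x₂² b₂ ≤ x₁² + x₂² = (|x₁| + |x₂|)² - 2 |x₁| |x₂|
= 1 - 2 |x₁| |x₂|`, so `|x₁| |x₂| = 0`: one coordinate vanishes and the other has absolute
value one. -/

lemma sq_add_sq_eq_of_abs_add_abs_eq_one {x₁ x₂ : ℝ} (hx : |x₁| + |x₂| = 1) :
    x₁ ^ 2 + x₂ ^ 2 = 1 - 2 * (|x₁| * |x₂|) := by
  rw [← sq_abs x₁, ← sq_abs x₂, ← one_pow 2, ← hx]
  ring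

lemma eq_zero_or_eq_zero_of_one_le_sq_add_sq {x₁ x₂ : ℝ} (hx : |x₁| + |x₂| = 1)
    (h : 1 ≤ x₁ ^ 2 + x₂ ^ 2) : x₁ = 0 ∨ x₂ = 0 := by
  rw [sq_add_sq_eq_of_abs_add_abs_eq_one hx] at h
  have hprod : |x₁| * |x₂| = 0 := le_antisymm (by linarith) (by positivity)
  simpa only [mul_eq_zero, abs_eq_zero] using hprod

lemma weighted_sq_add_sq_le_sq_add_sq {x₁ x₂ b₁ b₂ : ℝ} (hb₁ : b₁ ≤ 1) (hb₂ : b₂ ≤ 1) :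
    x₁ ^ 2 * b₁ + x₂ ^ 2 * b₂ ≤ x₁ ^ 2 + x₂ ^ 2 := by
  nlinarith [sq_nonneg x₁, sq_nonneg x₂]

theorem stmt_3 (x₁ x₂ b₁ b₂ : ℝ) (hx : |x₁| + |x₂| = 1)
    (hb : max |b₁| |b₂| = 1) (h : x₁ ^ 2 * b₁ + x₂ ^ 2 * b₂ = 1) :
    (|x₁| = 1 ∧ x₂ = 0) ∨ (x₁ = 0 ∧ |x₂| = 1) := by
  have hb₁ : b₁ ≤ 1 := (le_abs_self b₁).trans (hb ▸ le_max_left _ _)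
  have hb₂ : b₂ ≤ 1 := (le_abs_self b₂).trans (hb ▸ le_max_right _ _)
  have hsq : 1 ≤ x₁ ^ 2 + x₂ ^ 2 := h ▸ weighted_sq_add_sq_le_sq_add_sq hb₁ hb₂
  rcases eq_zero_or_eq_zero_of_one_le_sq_add_sq hx hsq with h₁ | h₂
  · exact Or.inr ⟨h₁, by simpa [h₁] using hx⟩
  · exact Or.inl ⟨by simpa [h₂] using hx, h₂⟩
end

section
/- Define P : ℝ² → ℝ² by P(x₁, x₂) = (x₁²/2 + 2x₁x₂, −x₂²/2 − x₁x₂) and consider ℝ² with the ℓ¹ norm. For every x = (x₁, x₂) with |x₁| + |x₂| = 1 and every b = (b₁, b₂) with max(|b₁|,|b₂|) = 1 satisfying x₁²b₁ + x₂²b₂ = 1, we have |(x₁²/2 + 2x₁x₂)b₁ + (−x₂²/2 − x₁x₂)b₂| = 1/2. -/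
/-- `1 = x₁² b₁ + x₂² b₂ ≤ x₁² + x₂² ≤ (|x₁| + |x₂|)² = 1`, so equality holds throughout and the
cross term `2 |x₁| |x₂|` vanishes. -/
lemma mul_eq_zero_of_sq_mul_add_sq_mul_eq_one {x₁ x₂ b₁ b₂ : ℝ} (hx : |x₁| + |x₂| = 1)
    (hb₁ : b₁ ≤ 1) (hb₂ : b₂ ≤ 1) (h : x₁ ^ 2 * b₁ + x₂ ^ 2 * b₂ = 1) : x₁ * x₂ = 0 := by
  have hsq : x₁ ^ 2 + x₂ ^ 2 + 2 * |x₁ * x₂| = 1 := by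
    rw [abs_mul, ← sq_abs x₁, ← sq_abs x₂]
    linear_combination (|x₁| + |x₂| + 1) * hx
  have h₁ : x₁ ^ 2 * b₁ ≤ x₁ ^ 2 := mul_le_of_le_one_right (sq_nonneg x₁) hb₁
  have h₂ : x₂ ^ 2 * b₂ ≤ x₂ ^ 2 := mul_le_of_le_one_right (sq_nonneg x₂) hb₂
  exact abs_eq_zero.mp (le_antisymm (by linarith) (abs_nonneg _))

theorem stmt_4 (x₁ x₂ b₁ b₂ : ℝ) (hx : |x₁| + |x₂| = 1)
    (hb : max |b₁| |b₂| = 1) (h : x₁ ^ 2 * b₁ + x₂ ^ 2 * b₂ = 1) :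
    |(x₁ ^ 2 / 2 + 2 * x₁ * x₂) * b₁ + (-x₂ ^ 2 / 2 - x₁ * x₂) * b₂| = 1 / 2 := by
  have hb₁ : b₁ ≤ 1 := (le_abs_self b₁).trans (hb ▸ le_max_left _ _)
  have hb₂ : b₂ ≤ 1 := (le_abs_self b₂).trans (hb ▸ le_max_right _ _)
  have hx₁x₂ := mul_eq_zero_of_sq_mul_add_sq_mul_eq_one hx hb₁ hb₂ h
  rw [show (x₁ ^ 2 / 2 + 2 * x₁ * x₂) * b₁ + (-x₂ ^ 2 / 2 - x₁ * x₂) * b₂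
      = (x₁ ^ 2 * b₁ - x₂ ^ 2 * b₂) / 2 by linear_combination (2 * b₁ - b₂) * hx₁x₂]
  -- One of the two terms of `h` vanishes, so the other one is `1`.
  rcases mul_eq_zero.mp hx₁x₂ with rfl | rfl
  · rw [show x₂ ^ 2 * b₂ = 1 by simpa using h]
    norm_num
  · rw [show x₁ ^ 2 * b₁ = 1 by simpa using h]
    norm_num
end

section
/- For all real x₁, x₂ with |x₁| + |x₂| ≤ 1, we have |x₁²/2 + 2x₁x₂| + |x₂²/2 + x₁x₂| ≤ 1 − 2(|x₂| − 1/2)² ≤ 1. -/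
theorem abs_sq_div_two_add_mul_le (x y c : ℝ) :
    |x ^ 2 / 2 + c * x * y| ≤ |x| ^ 2 / 2 + |c| * |x| * |y| := by
  calc |x ^ 2 / 2 + c * x * y| ≤ |x ^ 2 / 2| + |c * x * y| := abs_add_le _ _
    _ = |x| ^ 2 / 2 + |c| * |x| * |y| := by
        rw [abs_div, abs_pow, abs_two, abs_mul, abs_mul]

theorem stmt_5 (x₁ x₂ : ℝ) (h : |x₁| + |x₂| ≤ 1) :
    |x₁ ^ 2 / 2 + 2 * x₁ * x₂| + |x₂ ^ 2 / 2 + x₁ * x₂|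
      ≤ 1 - 2 * (|x₂| - 1 / 2) ^ 2 ∧ 1 - 2 * (|x₂| - 1 / 2) ^ 2 ≤ 1 := by
  have h₁ := abs_sq_div_two_add_mul_le x₁ x₂ 2
  have h₂ := abs_sq_div_two_add_mul_le x₂ x₁ 1
  rw [abs_two] at h₁
  rw [abs_one, one_mul, one_mul, mul_comm x₂ x₁] at h₂
  refine ⟨?_, by linarith [sq_nonneg (|x₂| - 1 / 2)]⟩
  calc |x₁ ^ 2 / 2 + 2 * x₁ * x₂| + |x₂ ^ 2 / 2 + x₁ * x₂|
      ≤ (|x₁| + |x₂|) ^ 2 / 2 + 2 * |x₁| * |x₂| := by linarith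
    _ ≤ 1 ^ 2 / 2 + 2 * (1 - |x₂|) * |x₂| := by gcongr; linarith
    _ = 1 - 2 * (|x₂| - 1 / 2) ^ 2 := by ring
end

section
/- Let 1 < p < ∞ with conjugate exponent q (1/p + 1/q = 1), let k ≥ p be an integer, and let x = (x₁, x₂), b = (b₁, b₂) ∈ ℝ² satisfy |x₁|^p + |x₂|^p = 1, |b₁|^q + |b₂|^q = 1, and x₁^k b₁ + x₂^k b₂ = 1. Then (x₁ = 0 or x₂ = 0), and in either case x₂^k b₁ + x₁^k b₂ = 0. -/
/-!
Since `|xᵢ|, |bᵢ| ≤ 1` and `k ≥ p`, each term satisfies `xᵢ ^ k * bᵢ ≤ |xᵢ| ^ k * |bᵢ| ≤ |xᵢ| ^ p`,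
and these bounds add up to `|x₁| ^ p + |x₂| ^ p = 1`. Equality therefore holds termwise, which
forces `|bᵢ| = 1` whenever `xᵢ ≠ 0`. Both `|bᵢ|` cannot be `1` because `|b₁| ^ q + |b₂| ^ q = 1`,
so some `xᵢ` vanishes; the other coordinate then has `|bⱼ| = 1`, hence `bᵢ = 0`, and both terms of
`x₂ ^ k * b₁ + x₁ ^ k * b₂` vanish.
-/

namespace Real

variable {p a b x : ℝ} {k : ℕ}

lemma abs_le_one_of_abs_rpow_add_abs_rpow_eq_one (hp : 0 < p) (h : |a| ^ p + |b| ^ p = 1) :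
    |a| ≤ 1 := by
  have hb : 0 ≤ |b| ^ p := rpow_nonneg (abs_nonneg b) p
  rw [← rpow_le_rpow_iff (abs_nonneg a) zero_le_one hp, one_rpow]
  linarith

lemma eq_zero_of_abs_rpow_add_abs_rpow_eq_one (h : |a| ^ p + |b| ^ p = 1) (hb : |b| = 1) :
    a = 0 := by
  rw [hb, one_rpow, add_eq_right, rpow_eq_zero_iff_of_nonneg (abs_nonneg a)] at h
  exact abs_eq_zero.mp h.1

lemma pow_le_rpow_of_le_one (ha₀ : 0 ≤ a) (ha₁ : a ≤ 1) (hp : 0 ≤ p) (hk : p ≤ k) :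
    a ^ k ≤ a ^ p := by
  rw [← rpow_natCast]
  exact rpow_le_rpow_of_exponent_ge' ha₀ ha₁ hp hk

lemma pow_mul_le_abs_pow_mul_abs (x b : ℝ) (k : ℕ) : x ^ k * b ≤ |x| ^ k * |b| := by
  rw [← abs_pow, ← abs_mul]
  exact le_abs_self _

lemma pow_mul_le_abs_rpow (hp : 0 ≤ p) (hk : p ≤ k) (hx : |x| ≤ 1) (hb : |b| ≤ 1) :
    x ^ k * b ≤ |x| ^ p :=
  calc x ^ k * b ≤ |x| ^ k * |b| := pow_mul_le_abs_pow_mul_abs x b k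
    _ ≤ |x| ^ k := mul_le_of_le_one_right (by positivity) hb
    _ ≤ |x| ^ p := pow_le_rpow_of_le_one (abs_nonneg x) hx hp hk

lemma abs_eq_one_of_pow_mul_eq_abs_rpow (hp : 0 ≤ p) (hk : p ≤ k) (hx₀ : x ≠ 0)
    (hx : |x| ≤ 1) (hb : |b| ≤ 1) (h : x ^ k * b = |x| ^ p) : |b| = 1 := by
  have hpos : 0 < |x| ^ p := rpow_pos_of_pos (abs_pos.mpr hx₀) p
  have : |x| ^ p ≤ |x| ^ p * |b| :=
    calc |x| ^ p = x ^ k * b := h.symm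
      _ ≤ |x| ^ k * |b| := pow_mul_le_abs_pow_mul_abs x b k
      _ ≤ |x| ^ p * |b| := by
        gcongr
        exact pow_le_rpow_of_le_one (abs_nonneg x) hx hp hk
  exact le_antisymm hb (le_of_mul_le_mul_left (by simpa using this) hpos)

end Real

open Real

theorem stmt_7 (p q : ℝ) (hp : 1 < p) (hq : 1 / p + 1 / q = 1)
    (k : ℕ) (hk : p ≤ (k : ℝ)) (x₁ x₂ b₁ b₂ : ℝ)
    (hx : |x₁| ^ p + |x₂| ^ p = 1) (hb : |b₁| ^ q + |b₂| ^ q = 1)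
    (h : x₁ ^ k * b₁ + x₂ ^ k * b₂ = 1) :
    (x₁ = 0 ∨ x₂ = 0) ∧ x₂ ^ k * b₁ + x₁ ^ k * b₂ = 0 := by
  have hp₀ : 0 < p := by linarith
  have hq₀ : 0 < q := (holderConjugate_iff.mpr ⟨hp, by simpa only [one_div] using hq⟩).symm.pos
  have hk₀ : k ≠ 0 := by rintro rfl; norm_num at hk; linarith
  have hx₁ := abs_le_one_of_abs_rpow_add_abs_rpow_eq_one hp₀ hx
  have hx₂ := abs_le_one_of_abs_rpow_add_abs_rpow_eq_one hp₀ ((add_comm _ _).trans hx)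
  have hb₁ := abs_le_one_of_abs_rpow_add_abs_rpow_eq_one hq₀ hb
  have hb₂ := abs_le_one_of_abs_rpow_add_abs_rpow_eq_one hq₀ ((add_comm _ _).trans hb)
  have le₁ := pow_mul_le_abs_rpow hp₀.le hk hx₁ hb₁
  have le₂ := pow_mul_le_abs_rpow hp₀.le hk hx₂ hb₂
  have eq₁ : x₁ ^ k * b₁ = |x₁| ^ p := by linarith
  have eq₂ : x₂ ^ k * b₂ = |x₂| ^ p := by linarith
  have one₁ (h₁ : x₁ ≠ 0) := abs_eq_one_of_pow_mul_eq_abs_rpow hp₀.le hk h₁ hx₁ hb₁ eq₁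
  have one₂ (h₂ : x₂ ≠ 0) := abs_eq_one_of_pow_mul_eq_abs_rpow hp₀.le hk h₂ hx₂ hb₂ eq₂
  have hzero : x₁ = 0 ∨ x₂ = 0 := by
    by_contra! hne
    rw [one₁ hne.1, one₂ hne.2, one_rpow] at hb
    norm_num at hb
  refine ⟨hzero, ?_⟩
  rcases hzero with rfl | rfl
  · have h₂ : x₂ ≠ 0 := by rintro rfl; simp [zero_rpow hp₀.ne'] at hx
    simp [eq_zero_of_abs_rpow_add_abs_rpow_eq_one hb (one₂ h₂), hk₀]
  · have h₁ : x₁ ≠ 0 := by rintro rfl; simp [zero_rpow hp₀.ne'] at hx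
    simp [eq_zero_of_abs_rpow_add_abs_rpow_eq_one ((add_comm _ _).trans hb) (one₁ h₁), hk₀]
end

section
/- For all real x₁, x₂ with max(|x₁|, |x₂|) ≤ 1, we have |x₁²x₂ − x₂³| ≤ 1, and the supremum of |x₁²x₂ − x₂³| over the closed unit ball of ℓ∞² equals 1 (attained at (0, 1)). -/
lemma abs_sq_mul_sub_pow_three_le_one {R : Type*} [CommRing R] [LinearOrder R]
    [IsStrictOrderedRing R] {x₁ x₂ : R} (h₁ : |x₁| ≤ 1) (h₂ : |x₂| ≤ 1) :
    |x₁ ^ 2 * x₂ - x₂ ^ 3| ≤ 1 := by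
  have hdiff : |x₁ ^ 2 - x₂ ^ 2| ≤ 1 :=
    abs_sub_le_of_nonneg_of_le (sq_nonneg x₁) ((sq_le_one_iff_abs_le_one x₁).2 h₁)
      (sq_nonneg x₂) ((sq_le_one_iff_abs_le_one x₂).2 h₂)
  calc |x₁ ^ 2 * x₂ - x₂ ^ 3| = |x₂| * |x₁ ^ 2 - x₂ ^ 2| := by rw [← abs_mul]; ring_nf
    _ ≤ 1 * 1 := mul_le_mul h₂ hdiff (abs_nonneg _) zero_le_one
    _ = 1 := one_mul 1

theorem stmt_8 :
    (∀ x₁ x₂ : ℝ, max |x₁| |x₂| ≤ 1 → |x₁ ^ 2 * x₂ - x₂ ^ 3| ≤ 1) ∧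
    sSup { r : ℝ | ∃ x₁ x₂ : ℝ, max |x₁| |x₂| ≤ 1 ∧ r = |x₁ ^ 2 * x₂ - x₂ ^ 3| } = 1 := by
  have bound : ∀ x₁ x₂ : ℝ, max |x₁| |x₂| ≤ 1 → |x₁ ^ 2 * x₂ - x₂ ^ 3| ≤ 1 := fun _ _ h =>
    abs_sq_mul_sub_pow_three_le_one (le_of_max_le_left h) (le_of_max_le_right h)
  refine ⟨bound, IsGreatest.csSup_eq ⟨⟨0, 1, by norm_num⟩, ?_⟩⟩
  rintro r ⟨x₁, x₂, h, rfl⟩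
  exact bound x₁ x₂ h
end

section
/- Let x = (x₁, x₂) ∈ ℝ² with max(|x₁|, |x₂|) = 1 and b = (b₁, b₂) ∈ ℝ² with |b₁| + |b₂| = 1. If x₁³b₁ + x₂³b₂ = 1, then |(x₁²x₂ − x₂³)b₁| ≤ 2/(3√3). -/
/-!
Since `|xᵢ| ≤ 1`, each term `xᵢ³ bᵢ` is at most `|bᵢ|`, and these bounds sum to `1`; so the norming
condition forces `xᵢ³ bᵢ = |bᵢ|`, hence `xᵢ² = 1` whenever `bᵢ ≠ 0`. If `b₁ = 0` or both `bᵢ ≠ 0`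
the quantity vanishes (`x₁² = x₂²`); otherwise `|b₁| = 1`, `x₁² = 1`, and it is `|x₂ - x₂³|`, whose
maximum over `[-1, 1]` is `2 / (3√3)`, attained at `x₂ = ±1/√3`.
-/

open Real

lemma sub_pow_three_le_of_neg_one_le {u : ℝ} (hu : -1 ≤ u) : u - u ^ 3 ≤ 2 / (3 * √3) := by
  have hs : (0 : ℝ) < √3 := by positivity
  have hs2 : √3 ^ 2 = 3 := sq_sqrt (by norm_num)
  have hs_le : √3 ≤ 2 := by nlinarith
  have factor : 2 - (u - u ^ 3) * (3 * √3) = (√3 * u - 1) ^ 2 * (√3 * u + 2) := by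
    linear_combination (-√3 * u ^ 3) * hs2
  have : 0 ≤ (√3 * u - 1) ^ 2 * (√3 * u + 2) := by
    have : 0 ≤ √3 * u + 2 := by nlinarith
    positivity
  rw [le_div_iff₀ (by positivity)]
  linarith

lemma abs_sub_pow_three_le {t : ℝ} (ht : |t| ≤ 1) : |t - t ^ 3| ≤ 2 / (3 * √3) := by
  obtain ⟨hlo, hhi⟩ := abs_le.mp ht
  have hneg := sub_pow_three_le_of_neg_one_le (u := -t) (by linarith)
  rw [abs_le]
  constructor <;> linarith [sub_pow_three_le_of_neg_one_le hlo]

lemma pow_mul_le_abs {x : ℝ} (b : ℝ) (n : ℕ) (hx : |x| ≤ 1) : x ^ n * b ≤ |b| :=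
  calc x ^ n * b ≤ |x ^ n * b| := le_abs_self _
    _ = |x| ^ n * |b| := by rw [abs_mul, abs_pow]
    _ ≤ 1 * |b| := by gcongr; exact pow_le_one₀ (abs_nonneg x) hx
    _ = |b| := one_mul _

lemma sq_eq_one_of_pow_mul_eq_abs {x b : ℝ} {n : ℕ} (hn : n ≠ 0) (hb : b ≠ 0)
    (h : x ^ n * b = |b|) : x ^ 2 = 1 := by
  have hpow : |x| ^ n = 1 := by
    have : |x| ^ n * |b| = 1 * |b| := by rw [← abs_pow, ← abs_mul, h, abs_abs, one_mul]
    exact mul_right_cancel₀ (abs_ne_zero.mpr hb) this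
  rw [← sq_abs, (pow_eq_one_iff_of_nonneg (abs_nonneg x) hn).mp hpow, one_pow]

theorem stmt_9 (x₁ x₂ b₁ b₂ : ℝ) (hx : max |x₁| |x₂| = 1)
    (hb : |b₁| + |b₂| = 1) (h : x₁ ^ 3 * b₁ + x₂ ^ 3 * b₂ = 1) :
    |(x₁ ^ 2 * x₂ - x₂ ^ 3) * b₁| ≤ 2 / (3 * Real.sqrt 3) := by
  obtain ⟨hx₁, hx₂⟩ := max_le_iff.mp hx.le
  have le₁ := pow_mul_le_abs b₁ 3 hx₁
  have le₂ := pow_mul_le_abs b₂ 3 hx₂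
  have norming₁ : x₁ ^ 3 * b₁ = |b₁| := by linarith
  have norming₂ : x₂ ^ 3 * b₂ = |b₂| := by linarith
  rcases eq_or_ne b₁ 0 with rfl | hb₁
  · rw [mul_zero, abs_zero]
    positivity
  have hx₁_sq := sq_eq_one_of_pow_mul_eq_abs three_ne_zero hb₁ norming₁
  rcases eq_or_ne b₂ 0 with rfl | hb₂
  · have hb₁_abs : |b₁| = 1 := by simpa using hb
    rw [abs_mul, hb₁_abs, mul_one, hx₁_sq, one_mul]
    exact abs_sub_pow_three_le hx₂
  · have hx₂_sq := sq_eq_one_of_pow_mul_eq_abs three_ne_zero hb₂ norming₂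
    have vanish : x₁ ^ 2 * x₂ - x₂ ^ 3 = 0 := by
      linear_combination x₂ * hx₁_sq - x₂ * hx₂_sq
    rw [vanish, zero_mul, abs_zero]
    positivity
end

section
/- Let X, Y be Banach spaces, Q a continuous k-homogeneous polynomial from X to Y with ‖Q‖ = 1, and T ∈ L(Y) a bounded linear operator. If v(T) denotes the classical numerical radius of T (v(T) = sup{|y*(T y)| : y ∈ S_Y, y* ∈ S_{Y*}, y*(y) = 1}) and v_Q denotes the numerical radius of a k-homogeneous polynomial with respect to Q, then v_Q(T ∘ Q) ≤ v(T). -/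
noncomputable section

/-- `P : X → Y` is a continuous `k`-homogeneous polynomial: it is given by a continuous
`k`-linear map evaluated on the diagonal. -/
def IsHomPoly (𝕜 : Type*) [RCLike 𝕜] {X Y : Type*} [NormedAddCommGroup X] [NormedSpace 𝕜 X]
    [NormedAddCommGroup Y] [NormedSpace 𝕜 Y] (k : ℕ) (P : X → Y) : Prop :=
  ∃ A : ContinuousMultilinearMap 𝕜 (fun _ : Fin k => X) Y, ∀ x, P x = A (fun _ => x)

/-- The norm of a polynomial: the supremum of `‖P x‖` over the closed unit ball. -/
def polyNorm {X Y : Type*} [NormedAddCommGroup X] [NormedAddCommGroup Y] (P : X → Y) : ℝ :=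
  sSup { r : ℝ | ∃ x : X, ‖x‖ ≤ 1 ∧ r = ‖P x‖ }

/-- `v_{Q,δ}(P)`. -/
def vQdelta (𝕜 : Type*) [RCLike 𝕜] {X Y : Type*} [NormedAddCommGroup X] [NormedSpace 𝕜 X]
    [NormedAddCommGroup Y] [NormedSpace 𝕜 Y] (Q P : X → Y) (δ : ℝ) : ℝ :=
  sSup { r : ℝ | ∃ (x : X) (f : Y →L[𝕜] 𝕜), ‖x‖ = 1 ∧ ‖f‖ = 1 ∧
    1 - δ < RCLike.re (f (Q x)) ∧ r = ‖f (P x)‖ }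

/-- The numerical radius of `P` with respect to `Q`, as `inf_{δ>0} v_{Q,δ}(P)`. -/
def numRad (𝕜 : Type*) [RCLike 𝕜] {X Y : Type*} [NormedAddCommGroup X] [NormedSpace 𝕜 X]
    [NormedAddCommGroup Y] [NormedSpace 𝕜 Y] (Q P : X → Y) : ℝ :=
  sInf { r : ℝ | ∃ δ : ℝ, 0 < δ ∧ r = vQdelta 𝕜 Q P δ }

/-- The approximated spatial numerical range `V_Q(P)`. -/
def VQ (𝕜 : Type*) [RCLike 𝕜] {X Y : Type*} [NormedAddCommGroup X] [NormedSpace 𝕜 X]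
    [NormedAddCommGroup Y] [NormedSpace 𝕜 Y] (Q P : X → Y) : Set 𝕜 :=
  ⋂ δ ∈ Set.Ioi (0 : ℝ), closure { z : 𝕜 | ∃ (x : X) (f : Y →L[𝕜] 𝕜), ‖x‖ = 1 ∧ ‖f‖ = 1 ∧
    1 - δ < RCLike.re (f (Q x)) ∧ z = f (P x) }

/-- The polynomial numerical index `n_Q^{(k)}(X,Y)`. -/
def polyIndex (𝕜 : Type*) [RCLike 𝕜] {X Y : Type*} [NormedAddCommGroup X] [NormedSpace 𝕜 X]
    [NormedAddCommGroup Y] [NormedSpace 𝕜 Y] (k : ℕ) (Q : X → Y) : ℝ :=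
  sInf { r : ℝ | ∃ P : X → Y, IsHomPoly 𝕜 k P ∧ polyNorm P = 1 ∧ r = numRad 𝕜 Q P }

/-- The classical numerical radius of a bounded linear operator. -/
def numRadOp (𝕜 : Type*) [RCLike 𝕜] {Y : Type*} [NormedAddCommGroup Y] [NormedSpace 𝕜 Y]
    (T : Y →L[𝕜] Y) : ℝ :=
  sSup { r : ℝ | ∃ (y : Y) (f : Y →L[𝕜] 𝕜), ‖y‖ = 1 ∧ ‖f‖ = 1 ∧ f y = 1 ∧ r = ‖f (T y)‖ }

end

/-!
Testing `T` against a state `(y, g)` of `y` gives `‖y - s • T y‖ ≥ (1 - ‖s‖ v(T)) ‖y‖`. As `Y` is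
complete, `1 - s T` is invertible for small `s`, and this lower bound says its inverse `R` has norm
at most `1 / (1 - ‖s‖ v(T))`; since `1 + s T = R - (s T)² R`, we get
`‖1 + s T‖ ≤ 1 + ‖s‖ v(T) + O(‖s‖²)`. Now if `‖y‖ ≤ 1`, `‖f‖ ≤ 1` and `Re f y > 1 - δ`, rotating `s`
so that `s f (T y) = ‖s‖ ‖f (T y)‖` yields `‖s‖ ‖f (T y)‖ < δ + ‖s‖ v(T) + O(‖s‖²)`: such
approximate states see at most `v(T) + ε`. Finally `‖Q x‖ ≤ ‖Q‖ = 1` on the unit sphere, so the pairs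
defining `v_{Q,δ}(T ∘ Q)` are approximate states of `T`.
-/

open RCLike Filter Topology

section NumericalRadius

variable {𝕜 : Type*} [RCLike 𝕜] {Y : Type*} [NormedAddCommGroup Y] [NormedSpace 𝕜 Y]

lemma norm_apply_apply_le_opNorm (T : Y →L[𝕜] Y) {y : Y} {f : Y →L[𝕜] 𝕜} (hy : ‖y‖ = 1)
    (hf : ‖f‖ = 1) : ‖f (T y)‖ ≤ ‖T‖ :=
  calc ‖f (T y)‖ ≤ ‖f‖ * ‖T y‖ := f.le_opNorm _
    _ ≤ ‖T‖ := by simpa [hf, hy] using T.le_opNorm y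

lemma numRadOp_nonneg (T : Y →L[𝕜] Y) : 0 ≤ numRadOp 𝕜 T :=
  Real.sSup_nonneg (by rintro _ ⟨y, f, -, -, -, rfl⟩; exact norm_nonneg _)

lemma numRadOp_le_opNorm (T : Y →L[𝕜] Y) : numRadOp 𝕜 T ≤ ‖T‖ :=
  Real.sSup_le (by rintro _ ⟨y, f, hy, hf, -, rfl⟩; exact norm_apply_apply_le_opNorm T hy hf)
    (norm_nonneg T)

lemma norm_apply_le_numRadOp (T : Y →L[𝕜] Y) {y : Y} {f : Y →L[𝕜] 𝕜} (hy : ‖y‖ = 1)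
    (hf : ‖f‖ = 1) (hfy : f y = 1) : ‖f (T y)‖ ≤ numRadOp 𝕜 T :=
  le_csSup ⟨‖T‖, by rintro _ ⟨y, f, hy, hf, -, rfl⟩; exact norm_apply_apply_le_opNorm T hy hf⟩
    ⟨y, f, hy, hf, hfy, rfl⟩

lemma norm_apply_le_numRadOp_mul_norm (T : Y →L[𝕜] Y) {y : Y} {g : Y →L[𝕜] 𝕜} (hg : ‖g‖ = 1)
    (hgy : g y = ‖y‖) : ‖g (T y)‖ ≤ numRadOp 𝕜 T * ‖y‖ := by
  rcases eq_or_ne y 0 with rfl | hy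
  · simp
  have hy' : 0 < ‖y‖ := norm_pos_iff.2 hy
  have hstate := norm_apply_le_numRadOp T (y := (‖y‖⁻¹ : 𝕜) • y) (norm_smul_inv_norm hy) hg
    (by rw [map_smul, hgy, smul_eq_mul, ← ofReal_inv, ← ofReal_mul, inv_mul_cancel₀ hy'.ne',
      ofReal_one])
  rw [map_smul, map_smul, norm_smul, norm_inv, norm_ofReal, abs_norm] at hstate
  rwa [inv_mul_le_iff₀ hy', mul_comm] at hstate

lemma mul_norm_le_norm_sub_smul_apply (T : Y →L[𝕜] Y) (s : 𝕜) (y : Y) :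
    (1 - ‖s‖ * numRadOp 𝕜 T) * ‖y‖ ≤ ‖y - s • T y‖ := by
  rcases eq_or_ne y 0 with rfl | hy
  · simp
  obtain ⟨g, hg, hgy⟩ := exists_dual_vector 𝕜 y (norm_ne_zero_iff.2 hy)
  have hTy := norm_apply_le_numRadOp_mul_norm T hg hgy
  calc (1 - ‖s‖ * numRadOp 𝕜 T) * ‖y‖ = ‖y‖ - ‖s‖ * (numRadOp 𝕜 T * ‖y‖) := by ring
    _ ≤ ‖y‖ - ‖s * g (T y)‖ := by rw [norm_mul]; gcongr
    _ ≤ re (g y) - re (s * g (T y)) := by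
      rw [hgy, ofReal_re]; linarith [re_le_norm (s * g (T y))]
    _ = re (g (y - s • T y)) := by rw [map_sub, map_smul, smul_eq_mul, map_sub]
    _ ≤ ‖g (y - s • T y)‖ := re_le_norm _
    _ ≤ ‖y - s • T y‖ := by simpa [hg] using g.le_opNorm (y - s • T y)

end NumericalRadius

section NeumannBound

variable {𝕜 : Type*} [RCLike 𝕜] {Y : Type*} [NormedAddCommGroup Y] [NormedSpace 𝕜 Y]
  [CompleteSpace Y]

lemma norm_add_smul_apply_le (T : Y →L[𝕜] Y) (s : 𝕜) (y : Y) (hs : ‖s‖ * ‖T‖ < 1) :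
    ‖y + s • T y‖ ≤ (1 + (‖s‖ * ‖T‖) ^ 2) / (1 - ‖s‖ * numRadOp 𝕜 T) * ‖y‖ := by
  set A : Y →L[𝕜] Y := s • T
  have hA : ‖A‖ = ‖s‖ * ‖T‖ := norm_smul s T
  set c := 1 - ‖s‖ * numRadOp 𝕜 T
  have hc : 0 < c := by
    nlinarith [numRadOp_le_opNorm T, norm_nonneg s]
  let u := Units.oneSub A (hA ▸ hs)
  set R : Y →L[𝕜] Y := ↑u⁻¹
  have hR : R - A * R = 1 := by rw [← u.mul_inv, Units.val_oneSub]; noncomm_ring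
  have hRy : ‖R y‖ ≤ ‖y‖ / c := by
    rw [le_div_iff₀ hc, mul_comm]
    calc c * ‖R y‖ ≤ ‖R y - s • T (R y)‖ := mul_norm_le_norm_sub_smul_apply T s (R y)
      _ = ‖y‖ := congr(‖$hR y‖)
  have hsum : 1 + A = R - A * A * R :=
    calc 1 + A = (R - A * R) + A * (R - A * R) := by rw [hR, mul_one]
      _ = R - A * A * R := by noncomm_ring
  have hy : y + s • T y = R y - A (A (R y)) := congr($hsum y)
  rw [hy]
  calc ‖R y - A (A (R y))‖ ≤ ‖R y‖ + ‖A (A (R y))‖ := norm_sub_le _ _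
    _ ≤ ‖R y‖ + ‖A‖ * (‖A‖ * ‖R y‖) := by
      gcongr
      exact (A.le_opNorm _).trans (by gcongr; exact A.le_opNorm _)
    _ = (1 + ‖A‖ ^ 2) * ‖R y‖ := by ring
    _ ≤ (1 + ‖A‖ ^ 2) * (‖y‖ / c) := by gcongr
    _ = (1 + (‖s‖ * ‖T‖) ^ 2) / c * ‖y‖ := by rw [hA]; ring

end NeumannBound

theorem exists_pos_forall_norm_apply_le_numRadOp_add {𝕜 : Type*} [RCLike 𝕜] {Y : Type*}
    [NormedAddCommGroup Y] [NormedSpace 𝕜 Y] [CompleteSpace Y] (T : Y →L[𝕜] Y) {ε : ℝ}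
    (hε : 0 < ε) :
    ∃ δ > 0, ∀ (y : Y) (f : Y →L[𝕜] 𝕜), ‖y‖ ≤ 1 → ‖f‖ ≤ 1 → 1 - δ < re (f y) →
      ‖f (T y)‖ ≤ numRadOp 𝕜 T + ε := by
  set v := numRadOp 𝕜 T
  have hsmall : Tendsto (fun t : ℝ => t * ‖T‖) (𝓝 0) (𝓝 0) := by
    simpa using (tendsto_id (x := 𝓝 (0 : ℝ))).mul_const ‖T‖
  have hslope : Tendsto (fun t : ℝ => (v + t * ‖T‖ ^ 2) / (1 - t * v)) (𝓝 0) (𝓝 v) := by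
    have : ContinuousAt (fun t : ℝ => (v + t * ‖T‖ ^ 2) / (1 - t * v)) 0 := by
      fun_prop (disch := simp)
    simpa using this.tendsto
  obtain ⟨t, ht, htT, htv⟩ : ∃ t > 0, t * ‖T‖ < 1 ∧
      (v + t * ‖T‖ ^ 2) / (1 - t * v) < v + ε / 2 :=
    ((hsmall.eventually_lt_const one_pos).and
      (hslope.eventually_lt_const (by linarith))).exists_gt
  have hden : 0 < 1 - t * v := by nlinarith [numRadOp_le_opNorm T]
  refine ⟨t * ε / 2, by positivity, fun y f hy hf hfy => ?_⟩
  obtain ⟨c, hc1, hcf⟩ := exists_norm_eq_mul_self (f (T y))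
  have hs : ‖(t : 𝕜) * c‖ = t := by rw [norm_mul, hc1, mul_one, norm_ofReal, abs_of_pos ht]
  have hrotate : re (f (y + ((t : 𝕜) * c) • T y)) = re (f y) + t * ‖f (T y)‖ := by
    rw [map_add, map_smul, smul_eq_mul, mul_assoc, ← hcf, ← ofReal_mul, map_add, ofReal_re]
  have hbound : re (f (y + ((t : 𝕜) * c) • T y)) ≤ (1 + (t * ‖T‖) ^ 2) / (1 - t * v) :=
    calc re (f (y + ((t : 𝕜) * c) • T y)) ≤ ‖f (y + ((t : 𝕜) * c) • T y)‖ := re_le_norm _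
      _ ≤ ‖y + ((t : 𝕜) * c) • T y‖ := f.le_of_opNorm_le hf _ |>.trans_eq (one_mul _)
      _ ≤ (1 + (t * ‖T‖) ^ 2) / (1 - t * v) * ‖y‖ := by
        have := norm_add_smul_apply_le T ((t : 𝕜) * c) y (by rwa [hs])
        rwa [hs] at this
      _ ≤ (1 + (t * ‖T‖) ^ 2) / (1 - t * v) := mul_le_of_le_one_right (by positivity) hy
  have hexpand : (1 + (t * ‖T‖) ^ 2) / (1 - t * v) = 1 + t * ((v + t * ‖T‖ ^ 2) / (1 - t * v)) := by
    field_simp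
    ring
  rw [hrotate, hexpand] at hbound
  nlinarith

lemma IsHomPoly.norm_le_polyNorm {𝕜 : Type*} [RCLike 𝕜] {X Y : Type*} [NormedAddCommGroup X]
    [NormedSpace 𝕜 X] [NormedAddCommGroup Y] [NormedSpace 𝕜 Y] {k : ℕ} {P : X → Y}
    (hP : IsHomPoly 𝕜 k P) {x : X} (hx : ‖x‖ ≤ 1) : ‖P x‖ ≤ polyNorm P := by
  obtain ⟨A, hA⟩ := hP
  refine le_csSup ⟨‖A‖, ?_⟩ ⟨x, hx, rfl⟩
  rintro _ ⟨x', hx', rfl⟩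
  simpa [hA] using A.le_opNorm_mul_prod_of_le (b := fun _ => 1) fun _ => hx'

section NumericalRadiusWRT

variable {𝕜 : Type*} [RCLike 𝕜] {X Y : Type*} [NormedAddCommGroup X] [NormedSpace 𝕜 X]
  [NormedAddCommGroup Y] [NormedSpace 𝕜 Y]

lemma vQdelta_nonneg (Q P : X → Y) (δ : ℝ) : 0 ≤ vQdelta 𝕜 Q P δ :=
  Real.sSup_nonneg (by rintro _ ⟨x, f, -, -, -, rfl⟩; exact norm_nonneg _)

lemma numRad_le_vQdelta (Q P : X → Y) {δ : ℝ} (hδ : 0 < δ) : numRad 𝕜 Q P ≤ vQdelta 𝕜 Q P δ :=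
  csInf_le ⟨0, by rintro _ ⟨δ', -, rfl⟩; exact vQdelta_nonneg Q P δ'⟩ ⟨δ, hδ, rfl⟩

end NumericalRadiusWRT

theorem stmt_13_general (𝕜 : Type*) [RCLike 𝕜] (X Y : Type*) [NormedAddCommGroup X] [NormedSpace 𝕜 X]
    [NormedAddCommGroup Y] [NormedSpace 𝕜 Y] [CompleteSpace Y]
    (k : ℕ) (Q : X → Y) (hQ : IsHomPoly 𝕜 k Q) (hQ1 : polyNorm Q = 1)
    (T : Y →L[𝕜] Y) :
    numRad 𝕜 Q (fun x => T (Q x)) ≤ numRadOp 𝕜 T := by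
  refine le_of_forall_pos_le_add fun ε hε => ?_
  obtain ⟨δ, hδ, hstate⟩ := exists_pos_forall_norm_apply_le_numRadOp_add T hε
  refine (numRad_le_vQdelta Q _ hδ).trans <|
    Real.sSup_le ?_ (add_nonneg (numRadOp_nonneg T) hε.le)
  rintro _ ⟨x, f, hx, hf, hfQ, rfl⟩
  exact hstate (Q x) f (hQ1 ▸ hQ.norm_le_polyNorm hx.le) hf.le hfQ

theorem stmt_13 (𝕜 : Type*) [RCLike 𝕜] (X Y : Type*) [NormedAddCommGroup X] [NormedSpace 𝕜 X]
    [NormedAddCommGroup Y] [NormedSpace 𝕜 Y] [CompleteSpace X] [CompleteSpace Y]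
    (k : ℕ) (Q : X → Y) (hQ : IsHomPoly 𝕜 k Q) (hQ1 : polyNorm Q = 1)
    (T : Y →L[𝕜] Y) :
    numRad 𝕜 Q (fun x => T (Q x)) ≤ numRadOp 𝕜 T :=
  stmt_13_general 𝕜 X Y k Q hQ hQ1 T
end

section
/- Let X be a finite-dimensional normed space, Y a Banach space, and Q, P continuous k-homogeneous polynomials from X to Y with ‖Q‖ = 1. Then V_Q(P) = { y*(P x) : x ∈ S_X, y* ∈ S_{Y*}, y*(Q x) = 1 }, where V_Q(P) = ⋂_{δ>0} closure{ y*(P x) : y* ∈ S_{Y*}, x ∈ S_X, Re y*(Q x) > 1 − δ }. -/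
open Filter Topology

theorem le_polyNorm_of_ne_zero {X Y : Type*} [NormedAddCommGroup X] [NormedAddCommGroup Y]
    {P : X → Y} (hP : polyNorm P ≠ 0) {x : X} (hx : ‖x‖ ≤ 1) : ‖P x‖ ≤ polyNorm P := by
  refine le_csSup ?_ ⟨x, hx, rfl⟩
  -- a set of reals that is not bounded above has `sSup = 0`
  by_contra hbdd
  exact hP (Real.sSup_of_not_bddAbove hbdd)

theorem IsHomPoly.continuous {𝕜 : Type*} [RCLike 𝕜] {X Y : Type*} [NormedAddCommGroup X]
    [NormedSpace 𝕜 X] [NormedAddCommGroup Y] [NormedSpace 𝕜 Y] {k : ℕ} {P : X → Y}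
    (hP : IsHomPoly 𝕜 k P) : Continuous P := by
  obtain ⟨A, hA⟩ := hP
  rw [funext hA]
  exact A.cont.comp (continuous_pi fun _ => continuous_id)

theorem RCLike.norm_sub_one_sq_le {𝕜 : Type*} [RCLike 𝕜] {a : 𝕜} (ha : ‖a‖ ≤ 1) :
    ‖a - 1‖ ^ 2 ≤ 2 * (1 - RCLike.re a) := by
  have := norm_sub_sq (𝕜 := 𝕜) a 1
  simp only [inner_apply, one_mul, conj_re, norm_one, one_pow] at this
  nlinarith [norm_nonneg a]

theorem tendsto_nhds_one_of_re_tendsto {𝕜 α : Type*} [RCLike 𝕜] {l : Filter α} {u : α → 𝕜}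
    (hu : ∀ a, ‖u a‖ ≤ 1) (hre : Tendsto (fun a => RCLike.re (u a)) l (𝓝 1)) :
    Tendsto u l (𝓝 1) := by
  rw [tendsto_iff_norm_sub_tendsto_zero]
  have hbound : Tendsto (fun a => √(2 * (1 - RCLike.re (u a)))) l (𝓝 0) := by
    simpa using ((hre.const_sub 1).const_mul 2).sqrt
  refine squeeze_zero (fun _ => norm_nonneg _) (fun a => ?_) hbound
  exact Real.le_sqrt_of_sq_le (RCLike.norm_sub_one_sq_le (hu a))

theorem tendsto_apply_of_tendsto_apply_of_norm_le {𝕜 E F α : Type*} [RCLike 𝕜]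
    [NormedAddCommGroup E] [NormedSpace 𝕜 E] [NormedAddCommGroup F] [NormedSpace 𝕜 F]
    {l : Filter α} {f : α → E →L[𝕜] F} {C : ℝ} (hf : ∀ a, ‖f a‖ ≤ C) {y : α → E} {y₀ : E}
    (hy : Tendsto y l (𝓝 y₀)) {c : F} (hfy : Tendsto (fun a => f a (y a)) l (𝓝 c)) :
    Tendsto (fun a => f a y₀) l (𝓝 c) := by
  have hdiff : Tendsto (fun a => f a (y a) - f a y₀) l (𝓝 0) := by
    rw [tendsto_zero_iff_norm_tendsto_zero]
    have hC : Tendsto (fun a => C * ‖y a - y₀‖) l (𝓝 0) := by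
      simpa using (tendsto_iff_norm_sub_tendsto_zero.1 hy).const_mul C
    refine squeeze_zero (fun _ => norm_nonneg _) (fun a => ?_) hC
    rw [← map_sub]
    exact (f a).le_of_opNorm_le (hf a) _
  simpa using hfy.sub hdiff

theorem exists_norm_le_one_apply_eq_of_tendsto {𝕜 E α ι : Type*} [RCLike 𝕜]
    [NormedAddCommGroup E] [NormedSpace 𝕜 E] [Finite ι] {l : Filter α} [l.NeBot]
    {f : α → E →L[𝕜] 𝕜} (hf : ∀ a, ‖f a‖ ≤ 1) {u : ι → E} {c : ι → 𝕜}
    (hfu : ∀ i, Tendsto (fun a => f a (u i)) l (𝓝 (c i))) :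
    ∃ g : E →L[𝕜] 𝕜, ‖g‖ ≤ 1 ∧ ∀ i, g (u i) = c i := by
  set W := Submodule.span 𝕜 (Set.range u)
  have huW : ∀ i, u i ∈ W := fun i => Submodule.subset_span ⟨i, rfl⟩
  have : FiniteDimensional 𝕜 W := FiniteDimensional.span_of_finite 𝕜 (Set.finite_range u)
  have : ProperSpace (W →L[𝕜] 𝕜) := FiniteDimensional.proper_rclike 𝕜 _
  set fW : α → W →L[𝕜] 𝕜 := fun a => (f a).comp W.subtypeL
  have hfW : ∀ a, fW a ∈ Metric.closedBall 0 1 := fun a => by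
    simpa using ((f a).opNorm_comp_le W.subtypeL).trans
      (mul_le_one₀ (hf a) (norm_nonneg _) (Submodule.norm_subtypeL_le W))
  obtain ⟨g, hg, hcluster⟩ :=
    (isCompact_closedBall (0 : W →L[𝕜] 𝕜) 1).exists_mapClusterPt
      (f := l) (tendsto_principal.2 (.of_forall hfW))
  have hgu : ∀ i, g ⟨u i, huW i⟩ = c i := fun i =>
    have hclusterAt : MapClusterPt (g ⟨u i, huW i⟩) l (fun a => f a (u i)) :=
      hcluster.continuousAt_comp (ContinuousLinearMap.apply 𝕜 𝕜 _).continuous.continuousAt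
    eq_of_nhds_neBot (hclusterAt.neBot.mono (inf_le_inf_left _ (hfu i)))
  obtain ⟨G, hGg, hGnorm⟩ := exists_extension_norm_eq W g
  exact ⟨G, hGnorm.trans_le (by simpa using hg), fun i => (hGg _).trans (hgu i)⟩

section NumericalRange

variable {𝕜 X Y : Type*} [RCLike 𝕜] [NormedAddCommGroup X] [NormedSpace 𝕜 X]
  [NormedAddCommGroup Y] [NormedSpace 𝕜 Y] {Q P : X → Y}

theorem setOf_apply_eq_one_subset_VQ :
    { z : 𝕜 | ∃ (x : X) (f : Y →L[𝕜] 𝕜), ‖x‖ = 1 ∧ ‖f‖ = 1 ∧ f (Q x) = 1 ∧ z = f (P x) } ⊆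
      VQ 𝕜 Q P := by
  rintro _ ⟨x, f, hx, hf, hfQ, rfl⟩
  refine Set.mem_iInter₂.2 fun δ hδ => subset_closure ⟨x, f, hx, hf, ?_, rfl⟩
  rw [hfQ, RCLike.one_re]
  linarith [Set.mem_Ioi.1 hδ]

theorem exists_apply_eq_one_of_mem_VQ [FiniteDimensional 𝕜 X] (hQ : Continuous Q)
    (hP : Continuous P) (hQle : ∀ x, ‖x‖ ≤ 1 → ‖Q x‖ ≤ 1) {z : 𝕜} (hz : z ∈ VQ 𝕜 Q P) :
    ∃ (x : X) (f : Y →L[𝕜] 𝕜), ‖x‖ = 1 ∧ ‖f‖ = 1 ∧ f (Q x) = 1 ∧ z = f (P x) := by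
  have happrox : ∀ n : ℕ, ∃ (x : X) (f : Y →L[𝕜] 𝕜), ‖x‖ = 1 ∧ ‖f‖ = 1 ∧
      1 - 1 / (n + 1 : ℝ) < RCLike.re (f (Q x)) ∧ dist (f (P x)) z < 1 / (n + 1) := fun n => by
    have hpos : (0 : ℝ) < 1 / (n + 1) := Nat.one_div_pos_of_nat
    obtain ⟨_, ⟨x, f, hx, hf, hre, rfl⟩, hdist⟩ :=
      Metric.mem_closure_iff.1 (Set.mem_iInter₂.1 hz _ hpos) _ hpos
    exact ⟨x, f, hx, hf, hre, by rwa [dist_comm]⟩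
  choose xs fs hxs hfs hre hdist using happrox
  have hnorm : ∀ n, ‖fs n (Q (xs n))‖ ≤ 1 := fun n =>
    (fs n).le_of_opNorm_le_of_le (hfs n).le (hQle _ (hxs n).le) |>.trans_eq (one_mul 1)
  have hQlim : Tendsto (fun n => fs n (Q (xs n))) atTop (𝓝 1) := by
    refine tendsto_nhds_one_of_re_tendsto hnorm (tendsto_of_tendsto_of_tendsto_of_le_of_le
      ?_ tendsto_const_nhds (fun n => (hre n).le) fun n => (RCLike.re_le_norm _).trans (hnorm n))
    simpa using tendsto_one_div_add_atTop_nhds_zero_nat.const_sub (1 : ℝ)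
  have hPlim : Tendsto (fun n => fs n (P (xs n))) atTop (𝓝 z) :=
    tendsto_iff_dist_tendsto_zero.2 (squeeze_zero (fun _ => dist_nonneg) (fun n => (hdist n).le)
      tendsto_one_div_add_atTop_nhds_zero_nat)
  have : ProperSpace X := FiniteDimensional.proper_rclike 𝕜 X
  obtain ⟨x, hx, φ, hφ, hxφ⟩ := (isCompact_sphere (0 : X) 1).tendsto_subseq
    (fun n => mem_sphere_zero_iff_norm.2 (hxs n))
  have hx1 : ‖x‖ = 1 := mem_sphere_zero_iff_norm.1 hx
  obtain ⟨f, hf, hfu⟩ := exists_norm_le_one_apply_eq_of_tendsto (l := atTop)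
    (f := fun n => fs (φ n)) (fun n => (hfs _).le) (u := ![Q x, P x]) (c := ![1, z])
    (Fin.forall_fin_two.2
      ⟨tendsto_apply_of_tendsto_apply_of_norm_le (fun n => (hfs _).le)
        ((hQ.tendsto x).comp hxφ) (hQlim.comp hφ.tendsto_atTop),
      tendsto_apply_of_tendsto_apply_of_norm_le (fun n => (hfs _).le)
        ((hP.tendsto x).comp hxφ) (hPlim.comp hφ.tendsto_atTop)⟩)
  have hfQ : f (Q x) = 1 := hfu 0
  refine ⟨x, f, hx1, le_antisymm hf ?_, hfQ, (hfu 1).symm⟩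
  calc 1 = ‖f (Q x)‖ := by rw [hfQ, norm_one]
    _ ≤ ‖f‖ * ‖Q x‖ := f.le_opNorm _
    _ ≤ ‖f‖ := mul_le_of_le_one_right (norm_nonneg _) (hQle x hx1.le)

end NumericalRange

theorem stmt_18_general (𝕜 : Type*) [RCLike 𝕜] (X Y : Type*) [NormedAddCommGroup X] [NormedSpace 𝕜 X]
    [NormedAddCommGroup Y] [NormedSpace 𝕜 Y] [FiniteDimensional 𝕜 X]
    (k : ℕ) (Q P : X → Y) (hQ : IsHomPoly 𝕜 k Q) (hP : IsHomPoly 𝕜 k P)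
    (hQ1 : polyNorm Q = 1) :
    VQ 𝕜 Q P = { z : 𝕜 | ∃ (x : X) (f : Y →L[𝕜] 𝕜), ‖x‖ = 1 ∧ ‖f‖ = 1 ∧
      f (Q x) = 1 ∧ z = f (P x) } := by
  have hQle : ∀ x : X, ‖x‖ ≤ 1 → ‖Q x‖ ≤ 1 := fun x hx =>
    hQ1 ▸ le_polyNorm_of_ne_zero (hQ1 ▸ one_ne_zero) hx
  exact Set.Subset.antisymm
    (fun z hz => exists_apply_eq_one_of_mem_VQ hQ.continuous hP.continuous hQle hz)
    setOf_apply_eq_one_subset_VQ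

theorem stmt_18 (𝕜 : Type*) [RCLike 𝕜] (X Y : Type*) [NormedAddCommGroup X] [NormedSpace 𝕜 X]
    [NormedAddCommGroup Y] [NormedSpace 𝕜 Y] [FiniteDimensional 𝕜 X] [CompleteSpace Y]
    (k : ℕ) (Q P : X → Y) (hQ : IsHomPoly 𝕜 k Q) (hP : IsHomPoly 𝕜 k P)
    (hQ1 : polyNorm Q = 1) :
    VQ 𝕜 Q P = { z : 𝕜 | ∃ (x : X) (f : Y →L[𝕜] 𝕜), ‖x‖ = 1 ∧ ‖f‖ = 1 ∧
      f (Q x) = 1 ∧ z = f (P x) } :=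
  stmt_18_general 𝕜 X Y k Q P hQ hP hQ1
end
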